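/- arXiv:1601.07827 — 2 statements merged into one kernel-verified Lean document; each statement's English description precedes it below -/
import Mathlib

section
/- If H and K are two-sided Hom-ideals of a Hom-Leibniz algebra (L,α_L) with H, K ⊆ α_L(L), then [H,K] is a two-sided Hom-ideal of the Hom-Leibniz subalgebra (α_L(L), α_L|). -/
/-- A multiplicative Hom-Leibniz algebra structure. -/
def IsHomLeibniz {𝕜 L : Type*} [Field 𝕜] [AddCommGroup L] [Module 𝕜 L]
    (br : L →ₗ[𝕜] L →ₗ[𝕜] L) (α : L →ₗ[𝕜] L) : Prop :=
  (∀ x y z, br (α x) (br y z) = br (br x y) (α z) - br (br x z) (α y)) ∧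
  (∀ x y, α (br x y) = br (α x) (α y))

/-- Two-sided Hom-ideal of a Hom-Leibniz algebra. -/
def IsHomIdeal {𝕜 L : Type*} [Field 𝕜] [AddCommGroup L] [Module 𝕜 L]
    (br : L →ₗ[𝕜] L →ₗ[𝕜] L) (α : L →ₗ[𝕜] L) (H : Submodule 𝕜 L) : Prop :=
  (∀ x ∈ H, α x ∈ H) ∧ (∀ x ∈ H, ∀ y : L, br x y ∈ H ∧ br y x ∈ H)

/-- The commutator of two two-sided Hom-ideals: the subspace spanned by all brackets
`[h,k]` and `[k,h]` with `h ∈ H`, `k ∈ K`. -/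
def homCommutator {𝕜 L : Type*} [Field 𝕜] [AddCommGroup L] [Module 𝕜 L]
    (br : L →ₗ[𝕜] L →ₗ[𝕜] L) (H K : Submodule 𝕜 L) : Submodule 𝕜 L :=
  Submodule.span 𝕜 {z : L | ∃ h ∈ H, ∃ k ∈ K, z = br h k ∨ z = br k h}

/-!
`[H,K]` is spanned by the brackets `[h,k]` and `[k,h]`, and as `[H,K] = [K,H]` the closure
properties need only be checked on `[h,k]`. Multiplicativity gives `α[h,k] = [αh,αk]`, and with
`h = αh'`, `k = αk'` also `[h,k] = α[h',k']`. The Hom-Leibniz identity gives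
`[[h,k],αy] = [αh,[k,y]] + [[h,y],αk]` and `[αy,[h,k]] = [[y,h],αk] - [[y,k],αh]`, combinations of
brackets of elements of `H` and `K` because both are Hom-ideals.
-/

section

variable {𝕜 L : Type*} [Field 𝕜] [AddCommGroup L] [Module 𝕜 L]
  {br : L →ₗ[𝕜] L →ₗ[𝕜] L} {α : L →ₗ[𝕜] L} {H K : Submodule 𝕜 L}

namespace IsHomIdeal

variable {x : L}

theorem apply_mem (hH : IsHomIdeal br α H) (hx : x ∈ H) : α x ∈ H := hH.1 x hx

theorem bracket_mem_left (hH : IsHomIdeal br α H) (hx : x ∈ H) (y : L) : br x y ∈ H :=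
  (hH.2 x hx y).1

theorem bracket_mem_right (hH : IsHomIdeal br α H) (hx : x ∈ H) (y : L) : br y x ∈ H :=
  (hH.2 x hx y).2

end IsHomIdeal

theorem bracket_mem_homCommutator {h k : L} (hh : h ∈ H) (hk : k ∈ K) :
    br h k ∈ homCommutator br H K :=
  Submodule.subset_span ⟨h, hh, k, hk, Or.inl rfl⟩

theorem bracket_mem_homCommutator' {h k : L} (hh : h ∈ H) (hk : k ∈ K) :
    br k h ∈ homCommutator br H K :=
  Submodule.subset_span ⟨h, hh, k, hk, Or.inr rfl⟩

theorem homCommutator_comm : homCommutator br H K = homCommutator br K H := by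
  unfold homCommutator
  congr 1
  ext z
  constructor <;> rintro ⟨a, ha, b, hb, hz⟩ <;> exact ⟨b, hb, a, ha, hz.symm⟩

theorem homCommutator_le {S : Submodule 𝕜 L}
    (hS : ∀ h ∈ H, ∀ k ∈ K, br h k ∈ S ∧ br k h ∈ S) : homCommutator br H K ≤ S := by
  rw [homCommutator, Submodule.span_le]
  rintro z ⟨h, hh, k, hk, rfl | rfl⟩
  exacts [(hS h hh k hk).1, (hS h hh k hk).2]

theorem bracket_mem_range (hL : IsHomLeibniz br α) {a b : L} (ha : a ∈ LinearMap.range α)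
    (hb : b ∈ LinearMap.range α) : br a b ∈ LinearMap.range α := by
  obtain ⟨a, rfl⟩ := ha
  obtain ⟨b, rfl⟩ := hb
  exact ⟨br a b, hL.2 a b⟩

theorem homCommutator_le_range (hL : IsHomLeibniz br α) (hHr : H ≤ LinearMap.range α)
    (hKr : K ≤ LinearMap.range α) : homCommutator br H K ≤ LinearMap.range α :=
  homCommutator_le fun _ hh _ hk =>
    ⟨bracket_mem_range hL (hHr hh) (hKr hk), bracket_mem_range hL (hKr hk) (hHr hh)⟩

theorem map_homCommutator_le (hL : IsHomLeibniz br α) (hH : IsHomIdeal br α H)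
    (hK : IsHomIdeal br α K) : (homCommutator br H K).map α ≤ homCommutator br H K := by
  refine Submodule.map_le_iff_le_comap.2 <| homCommutator_le fun h hh k hk => ?_
  simp only [Submodule.mem_comap, hL.2]
  exact ⟨bracket_mem_homCommutator (hH.apply_mem hh) (hK.apply_mem hk),
    bracket_mem_homCommutator' (hH.apply_mem hh) (hK.apply_mem hk)⟩

theorem bracket_bracket_apply_mem_homCommutator (hL : IsHomLeibniz br α)
    (hH : IsHomIdeal br α H) (hK : IsHomIdeal br α K) {h k : L} (hh : h ∈ H) (hk : k ∈ K)
    (y : L) : br (br h k) (α y) ∈ homCommutator br H K := by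
  have hexpand : br (br h k) (α y) = br (α h) (br k y) + br (br h y) (α k) := by
    rw [hL.1 h k y, sub_add_cancel]
  rw [hexpand]
  exact add_mem (bracket_mem_homCommutator (hH.apply_mem hh) (hK.bracket_mem_left hk y))
    (bracket_mem_homCommutator (hH.bracket_mem_left hh y) (hK.apply_mem hk))

theorem apply_bracket_bracket_mem_homCommutator (hL : IsHomLeibniz br α)
    (hH : IsHomIdeal br α H) (hK : IsHomIdeal br α K) {h k : L} (hh : h ∈ H) (hk : k ∈ K)
    (y : L) : br (α y) (br h k) ∈ homCommutator br H K := by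
  rw [hL.1 y h k]
  exact sub_mem (bracket_mem_homCommutator (hH.bracket_mem_right hh y) (hK.apply_mem hk))
    (bracket_mem_homCommutator' (hH.apply_mem hh) (hK.bracket_mem_right hk y))

theorem bracket_apply_mem_homCommutator (hL : IsHomLeibniz br α) (hH : IsHomIdeal br α H)
    (hK : IsHomIdeal br α K) {z : L} (hz : z ∈ homCommutator br H K) (y : L) :
    br z (α y) ∈ homCommutator br H K :=
  homCommutator_le (S := (homCommutator br H K).comap (br.flip (α y))) (fun _ hh _ hk =>
    ⟨bracket_bracket_apply_mem_homCommutator hL hH hK hh hk y,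
      homCommutator_comm (br := br) ▸ bracket_bracket_apply_mem_homCommutator hL hK hH hk hh y⟩)
    hz

theorem apply_bracket_mem_homCommutator (hL : IsHomLeibniz br α) (hH : IsHomIdeal br α H)
    (hK : IsHomIdeal br α K) {z : L} (hz : z ∈ homCommutator br H K) (y : L) :
    br (α y) z ∈ homCommutator br H K :=
  homCommutator_le (S := (homCommutator br H K).comap (br (α y))) (fun _ hh _ hk =>
    ⟨apply_bracket_bracket_mem_homCommutator hL hH hK hh hk y,
      homCommutator_comm (br := br) ▸ apply_bracket_bracket_mem_homCommutator hL hK hH hk hh y⟩)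
    hz

end

/-- If `H, K ⊆ α_L(L)` are two-sided Hom-ideals of `(L,α_L)`, then `[H,K]` is a
two-sided Hom-ideal of the Hom-Leibniz subalgebra `(α_L(L), α_L|)`. -/
theorem homCommutator_isHomIdeal_of_range {𝕜 L : Type*} [Field 𝕜] [AddCommGroup L]
    [Module 𝕜 L]
    (br : L →ₗ[𝕜] L →ₗ[𝕜] L) (α : L →ₗ[𝕜] L) (hL : IsHomLeibniz br α)
    (H K : Submodule 𝕜 L) (hH : IsHomIdeal br α H) (hK : IsHomIdeal br α K)
    (hHr : H ≤ LinearMap.range α) (hKr : K ≤ LinearMap.range α) :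
    homCommutator br H K ≤ LinearMap.range α ∧
    (∀ z ∈ homCommutator br H K, α z ∈ homCommutator br H K) ∧
    ∀ z ∈ homCommutator br H K, ∀ y ∈ LinearMap.range α,
      br z y ∈ homCommutator br H K ∧ br y z ∈ homCommutator br H K := by
  refine ⟨homCommutator_le_range hL hHr hKr,
    fun z hz => map_homCommutator_le hL hH hK (Submodule.mem_map_of_mem hz), ?_⟩
  rintro z hz _ ⟨y, rfl⟩
  exact ⟨bracket_apply_mem_homCommutator hL hH hK hz y,
    apply_bracket_mem_homCommutator hL hH hK hz y⟩
end

section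
/- If (L,α_L) is a perfect Hom-Leibniz algebra (L = [L,L]), then the central extension ψ_L: (L∗L, α_{L∗L}) → (L,α_L), ψ_L(l∗l') = [l,l'], is the universal central extension of (L,α_L): for every central extension φ: (C,α_C) → (L,α_L) there exists a unique Hom-Leibniz homomorphism f: (L∗L,α_{L∗L}) → (C,α_C) with φ∘f = ψ_L. -/
/-- A Hom-Leibniz action of `(L,α_L)` on `(M,α_M)` (axioms (a)–(h)). -/
def IsHomLeibnizAction {𝕜 L M : Type*} [Field 𝕜] [AddCommGroup L] [Module 𝕜 L]
    [AddCommGroup M] [Module 𝕜 M]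
    (brL : L →ₗ[𝕜] L →ₗ[𝕜] L) (αL : L →ₗ[𝕜] L)
    (brM : M →ₗ[𝕜] M →ₗ[𝕜] M) (αM : M →ₗ[𝕜] M)
    (l : L →ₗ[𝕜] M →ₗ[𝕜] M) (r : M →ₗ[𝕜] L →ₗ[𝕜] M) : Prop :=
  (∀ x y m, r (αM m) (brL x y) = r (r m x) (αL y) - r (r m y) (αL x)) ∧
  (∀ x y m, l (brL x y) (αM m) = r (l x m) (αL y) - l (αL x) (r m y)) ∧
  (∀ x y m, l (αL x) (l y m) = - l (αL x) (r m y)) ∧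
  (∀ x m m', l (αL x) (brM m m') = brM (l x m) (αM m') - brM (l x m') (αM m)) ∧
  (∀ x m m', r (brM m m') (αL x) = brM (r m x) (αM m') + brM (αM m) (r m' x)) ∧
  (∀ x m m', brM (αM m) (l x m') = - brM (αM m) (r m' x)) ∧
  (∀ x m, αM (l x m) = l (αL x) (αM m)) ∧
  (∀ x m, αM (r m x) = r (αM m) (αL x))

section Tensor

variable {𝕜 M N : Type*} [Field 𝕜] [AddCommGroup M] [Module 𝕜 M]
  [AddCommGroup N] [Module 𝕜 N]

/-- The generator `m ∗ n` in the free module on symbols. -/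
noncomputable def g1 (𝕜 : Type*) [Field 𝕜] {M N : Type*} [AddCommGroup M] [Module 𝕜 M]
    [AddCommGroup N] [Module 𝕜 N] (m : M) (n : N) : ((M × N) ⊕ (N × M)) →₀ 𝕜 :=
  Finsupp.single (Sum.inl (m, n)) 1

/-- The generator `n ∗ m` in the free module on symbols. -/
noncomputable def g2 (𝕜 : Type*) [Field 𝕜] {M N : Type*} [AddCommGroup M] [Module 𝕜 M]
    [AddCommGroup N] [Module 𝕜 N] (n : N) (m : M) : ((M × N) ⊕ (N × M)) →₀ 𝕜 :=
  Finsupp.single (Sum.inr (n, m)) 1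

/-- The defining relations of the non-abelian Hom-Leibniz tensor product `M ∗ N`:
bilinearity of `∗` in each variable, and the structural relations (1) of the paper.
Here `ml m n = ^m n`, `mr n m = n^m` (action of `M` on `N`) and `nl n m = ^n m`,
`nr m n = m^n` (action of `N` on `M`). -/
def tensorRel (brM : M →ₗ[𝕜] M →ₗ[𝕜] M) (brN : N →ₗ[𝕜] N →ₗ[𝕜] N)
    (αM : M →ₗ[𝕜] M) (αN : N →ₗ[𝕜] N)
    (ml : M →ₗ[𝕜] N →ₗ[𝕜] N) (mr : N →ₗ[𝕜] M →ₗ[𝕜] N)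
    (nl : N →ₗ[𝕜] M →ₗ[𝕜] M) (nr : M →ₗ[𝕜] N →ₗ[𝕜] M) :
    Set (((M × N) ⊕ (N × M)) →₀ 𝕜) :=
  {z |
    (∃ (c : 𝕜) (m : M) (n : N), z = g1 𝕜 (c • m) n - c • g1 𝕜 m n) ∨
    (∃ (c : 𝕜) (m : M) (n : N), z = g1 𝕜 m (c • n) - c • g1 𝕜 m n) ∨
    (∃ (c : 𝕜) (n : N) (m : M), z = g2 𝕜 (c • n) m - c • g2 𝕜 n m) ∨
    (∃ (c : 𝕜) (n : N) (m : M), z = g2 𝕜 n (c • m) - c • g2 𝕜 n m) ∨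
    (∃ (m m' : M) (n : N), z = g1 𝕜 (m + m') n - g1 𝕜 m n - g1 𝕜 m' n) ∨
    (∃ (m : M) (n n' : N), z = g1 𝕜 m (n + n') - g1 𝕜 m n - g1 𝕜 m n') ∨
    (∃ (n n' : N) (m : M), z = g2 𝕜 (n + n') m - g2 𝕜 n m - g2 𝕜 n' m) ∨
    (∃ (n : N) (m m' : M), z = g2 𝕜 n (m + m') - g2 𝕜 n m - g2 𝕜 n m') ∨
    (∃ (m : M) (n n' : N),
      z = g1 𝕜 (αM m) (brN n n') - g1 𝕜 (nr m n) (αN n') + g1 𝕜 (nr m n') (αN n)) ∨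
    (∃ (n : N) (m m' : M),
      z = g2 𝕜 (αN n) (brM m m') - g2 𝕜 (mr n m) (αM m') + g2 𝕜 (mr n m') (αM m)) ∨
    (∃ (m m' : M) (n : N),
      z = g1 𝕜 (brM m m') (αN n) - g2 𝕜 (ml m n) (αM m') + g1 𝕜 (αM m) (mr n m')) ∨
    (∃ (n n' : N) (m : M),
      z = g2 𝕜 (brN n n') (αM m) - g1 𝕜 (nl n m) (αN n') + g2 𝕜 (αN n) (nr m n')) ∨
    (∃ (m m' : M) (n : N), z = g1 𝕜 (αM m) (ml m' n) + g1 𝕜 (αM m) (mr n m')) ∨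
    (∃ (n n' : N) (m : M), z = g2 𝕜 (αN n) (nl n' m) + g2 𝕜 (αN n) (nr m n')) ∨
    (∃ (m m' : M) (n n' : N), z = g1 𝕜 (nr m n) (ml m' n') - g2 𝕜 (ml m n) (nr m' n')) ∨
    (∃ (m m' : M) (n n' : N), z = g1 𝕜 (nr m n) (mr n' m') - g2 𝕜 (ml m n) (nl n' m')) ∨
    (∃ (m m' : M) (n n' : N), z = g1 𝕜 (nl n m) (ml m' n') - g2 𝕜 (mr n m) (nr m' n')) ∨
    (∃ (m m' : M) (n n' : N), z = g1 𝕜 (nl n m) (mr n' m') - g2 𝕜 (mr n m) (nl n' m'))}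

/-- The underlying vector space of the non-abelian Hom-Leibniz tensor product `M ∗ N`. -/
abbrev HomTensor (brM : M →ₗ[𝕜] M →ₗ[𝕜] M) (brN : N →ₗ[𝕜] N →ₗ[𝕜] N)
    (αM : M →ₗ[𝕜] M) (αN : N →ₗ[𝕜] N)
    (ml : M →ₗ[𝕜] N →ₗ[𝕜] N) (mr : N →ₗ[𝕜] M →ₗ[𝕜] N)
    (nl : N →ₗ[𝕜] M →ₗ[𝕜] M) (nr : M →ₗ[𝕜] N →ₗ[𝕜] M) : Type _ :=
  (((M × N) ⊕ (N × M)) →₀ 𝕜) ⧸ Submodule.span 𝕜 (tensorRel brM brN αM αN ml mr nl nr)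

/-- The class of the generator `m ∗ n` in `M ∗ N`. -/
noncomputable def t1 (brM : M →ₗ[𝕜] M →ₗ[𝕜] M) (brN : N →ₗ[𝕜] N →ₗ[𝕜] N)
    (αM : M →ₗ[𝕜] M) (αN : N →ₗ[𝕜] N)
    (ml : M →ₗ[𝕜] N →ₗ[𝕜] N) (mr : N →ₗ[𝕜] M →ₗ[𝕜] N)
    (nl : N →ₗ[𝕜] M →ₗ[𝕜] M) (nr : M →ₗ[𝕜] N →ₗ[𝕜] M)
    (m : M) (n : N) : HomTensor brM brN αM αN ml mr nl nr :=
  Submodule.Quotient.mk (g1 𝕜 m n)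

/-- The class of the generator `n ∗ m` in `M ∗ N`. -/
noncomputable def t2 (brM : M →ₗ[𝕜] M →ₗ[𝕜] M) (brN : N →ₗ[𝕜] N →ₗ[𝕜] N)
    (αM : M →ₗ[𝕜] M) (αN : N →ₗ[𝕜] N)
    (ml : M →ₗ[𝕜] N →ₗ[𝕜] N) (mr : N →ₗ[𝕜] M →ₗ[𝕜] N)
    (nl : N →ₗ[𝕜] M →ₗ[𝕜] M) (nr : M →ₗ[𝕜] N →ₗ[𝕜] M)
    (n : N) (m : M) : HomTensor brM brN αM αN ml mr nl nr :=
  Submodule.Quotient.mk (g2 𝕜 n m)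

/-- Compatibility of mutual Hom-Leibniz actions of `(M,α_M)` and `(N,α_N)`. -/
def CompatibleActions (brM : M →ₗ[𝕜] M →ₗ[𝕜] M) (brN : N →ₗ[𝕜] N →ₗ[𝕜] N)
    (ml : M →ₗ[𝕜] N →ₗ[𝕜] N) (mr : N →ₗ[𝕜] M →ₗ[𝕜] N)
    (nl : N →ₗ[𝕜] M →ₗ[𝕜] M) (nr : M →ₗ[𝕜] N →ₗ[𝕜] M) : Prop :=
  (∀ (m m' : M) (n : N), nl (ml m n) m' = brM (nr m n) m') ∧
  (∀ (m m' : M) (n : N), nl (mr n m) m' = brM (nl n m) m') ∧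
  (∀ (m m' : M) (n : N), nr m (ml m' n) = brM m (nr m' n)) ∧
  (∀ (m m' : M) (n : N), nr m (mr n m') = brM m (nl n m')) ∧
  (∀ (n n' : N) (m : M), ml (nl n m) n' = brN (mr n m) n') ∧
  (∀ (n n' : N) (m : M), ml (nr m n) n' = brN (ml m n) n') ∧
  (∀ (n n' : N) (m : M), mr n (nl n' m) = brN n (mr n' m)) ∧
  (∀ (n n' : N) (m : M), mr n (nr m n') = brN n (ml m n'))

end Tensor

/-!
In `L ∗ L` the bracket of two generators is `t1` of their brackets in `L`, so
`Br z w = t1 (ψ z) (ψ w)`: `ψ` is a morphism with central kernel, onto because `L` is perfect.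
Perfectness of `L` also makes `L ∗ L` perfect, since `t1 [x,y] [x',y'] = Br (t1 x y) (t1 x' y')`
and `t2` agrees with `t1` on pairs of brackets.

For a central extension `φ : C → L`, the bracket of `C` depends only on the images under `φ`, so
it descends to a bilinear map `β` on `L`. The Hom-Leibniz identity of `C` passes to `β`, and that
identity is all the defining relations of `L ∗ L` ask of `β` once `L` acts on itself by its
bracket; so `l ∗ l' ↦ β l l'` defines `f`. It is unique because two morphisms from a perfect
algebra into a central extension that agree after `φ` agree on brackets, hence everywhere.
-/

section HomTensorGenerators

variable {𝕜 M N : Type*} [Field 𝕜] [AddCommGroup M] [Module 𝕜 M] [AddCommGroup N] [Module 𝕜 N]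
  {brM : M →ₗ[𝕜] M →ₗ[𝕜] M} {brN : N →ₗ[𝕜] N →ₗ[𝕜] N} {αM : M →ₗ[𝕜] M} {αN : N →ₗ[𝕜] N}
  {ml : M →ₗ[𝕜] N →ₗ[𝕜] N} {mr : N →ₗ[𝕜] M →ₗ[𝕜] N}
  {nl : N →ₗ[𝕜] M →ₗ[𝕜] M} {nr : M →ₗ[𝕜] N →ₗ[𝕜] M}

theorem HomTensor.mk_eq_zero_of_mem_tensorRel {z : ((M × N) ⊕ (N × M)) →₀ 𝕜}
    (hz : z ∈ tensorRel brM brN αM αN ml mr nl nr) :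
    (Submodule.Quotient.mk z : HomTensor brM brN αM αN ml mr nl nr) = 0 :=
  (Submodule.Quotient.mk_eq_zero _).2 (Submodule.subset_span hz)

theorem t1_smul_left (c : 𝕜) (m : M) (n : N) :
    t1 brM brN αM αN ml mr nl nr (c • m) n = c • t1 brM brN αM αN ml mr nl nr m n :=
  sub_eq_zero.1 <| HomTensor.mk_eq_zero_of_mem_tensorRel <| .inl ⟨c, m, n, rfl⟩

theorem t1_smul_right (c : 𝕜) (m : M) (n : N) :
    t1 brM brN αM αN ml mr nl nr m (c • n) = c • t1 brM brN αM αN ml mr nl nr m n :=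
  sub_eq_zero.1 <| HomTensor.mk_eq_zero_of_mem_tensorRel <| .inr <| .inl ⟨c, m, n, rfl⟩

theorem t2_smul_left (c : 𝕜) (n : N) (m : M) :
    t2 brM brN αM αN ml mr nl nr (c • n) m = c • t2 brM brN αM αN ml mr nl nr n m :=
  sub_eq_zero.1 <| HomTensor.mk_eq_zero_of_mem_tensorRel <| .inr <| .inr <| .inl ⟨c, n, m, rfl⟩

theorem t2_smul_right (c : 𝕜) (n : N) (m : M) :
    t2 brM brN αM αN ml mr nl nr n (c • m) = c • t2 brM brN αM αN ml mr nl nr n m :=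
  sub_eq_zero.1 <| HomTensor.mk_eq_zero_of_mem_tensorRel <|
    .inr <| .inr <| .inr <| .inl ⟨c, n, m, rfl⟩

theorem t1_add_left (m m' : M) (n : N) :
    t1 brM brN αM αN ml mr nl nr (m + m') n =
      t1 brM brN αM αN ml mr nl nr m n + t1 brM brN αM αN ml mr nl nr m' n :=
  sub_eq_zero.1 <| (sub_sub _ _ _).symm.trans <| HomTensor.mk_eq_zero_of_mem_tensorRel <|
    .inr <| .inr <| .inr <| .inr <| .inl ⟨m, m', n, rfl⟩

theorem t1_add_right (m : M) (n n' : N) :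
    t1 brM brN αM αN ml mr nl nr m (n + n') =
      t1 brM brN αM αN ml mr nl nr m n + t1 brM brN αM αN ml mr nl nr m n' :=
  sub_eq_zero.1 <| (sub_sub _ _ _).symm.trans <| HomTensor.mk_eq_zero_of_mem_tensorRel <|
    .inr <| .inr <| .inr <| .inr <| .inr <| .inl ⟨m, n, n', rfl⟩

theorem t2_add_left (n n' : N) (m : M) :
    t2 brM brN αM αN ml mr nl nr (n + n') m =
      t2 brM brN αM αN ml mr nl nr n m + t2 brM brN αM αN ml mr nl nr n' m :=
  sub_eq_zero.1 <| (sub_sub _ _ _).symm.trans <| HomTensor.mk_eq_zero_of_mem_tensorRel <|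
    .inr <| .inr <| .inr <| .inr <| .inr <| .inr <| .inl ⟨n, n', m, rfl⟩

theorem t2_add_right (n : N) (m m' : M) :
    t2 brM brN αM αN ml mr nl nr n (m + m') =
      t2 brM brN αM αN ml mr nl nr n m + t2 brM brN αM αN ml mr nl nr n m' :=
  sub_eq_zero.1 <| (sub_sub _ _ _).symm.trans <| HomTensor.mk_eq_zero_of_mem_tensorRel <|
    .inr <| .inr <| .inr <| .inr <| .inr <| .inr <| .inr <| .inl ⟨n, m, m', rfl⟩

theorem t1_nr_ml_eq_t2 (m m' : M) (n n' : N) :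
    t1 brM brN αM αN ml mr nl nr (nr m n) (ml m' n') =
      t2 brM brN αM αN ml mr nl nr (ml m n) (nr m' n') :=
  sub_eq_zero.1 <| HomTensor.mk_eq_zero_of_mem_tensorRel <|
    .inr <| .inr <| .inr <| .inr <| .inr <| .inr <| .inr <| .inr <| .inr <| .inr <| .inr <|
      .inr <| .inr <| .inr <| .inl ⟨m, m', n, n', rfl⟩

variable (brM brN αM αN ml mr nl nr)

noncomputable def t1Bilin : M →ₗ[𝕜] N →ₗ[𝕜] HomTensor brM brN αM αN ml mr nl nr :=
  LinearMap.mk₂ 𝕜 (t1 brM brN αM αN ml mr nl nr) t1_add_left t1_smul_left t1_add_right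
    t1_smul_right

noncomputable def t2Bilin : N →ₗ[𝕜] M →ₗ[𝕜] HomTensor brM brN αM αN ml mr nl nr :=
  LinearMap.mk₂ 𝕜 (t2 brM brN αM αN ml mr nl nr) t2_add_left t2_smul_left t2_add_right
    t2_smul_right

@[simp]
theorem t1Bilin_apply (m : M) (n : N) :
    t1Bilin brM brN αM αN ml mr nl nr m n = t1 brM brN αM αN ml mr nl nr m n :=
  rfl

@[simp]
theorem t2Bilin_apply (n : N) (m : M) :
    t2Bilin brM brN αM αN ml mr nl nr n m = t2 brM brN αM αN ml mr nl nr n m :=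
  rfl

theorem HomTensor.span_t1_t2_eq_top :
    Submodule.span 𝕜 ({x | ∃ m n, x = t1 brM brN αM αN ml mr nl nr m n} ∪
      {x | ∃ n m, x = t2 brM brN αM αN ml mr nl nr n m}) = ⊤ := by
  rw [eq_top_iff, ← Submodule.range_mkQ, LinearMap.range_eq_map,
    ← Finsupp.basisSingleOne.span_eq, Submodule.map_span, Finsupp.coe_basisSingleOne]
  refine Submodule.span_mono ?_
  rintro _ ⟨_, ⟨⟨m, n⟩ | ⟨n, m⟩, rfl⟩, rfl⟩
  exacts [.inl ⟨m, n, rfl⟩, .inr ⟨n, m, rfl⟩]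

variable {brM brN αM αN ml mr nl nr}

theorem HomTensor.linearMap_ext {P : Type*} [AddCommGroup P] [Module 𝕜 P]
    {f g : HomTensor brM brN αM αN ml mr nl nr →ₗ[𝕜] P}
    (h₁ : ∀ m n, f (t1 brM brN αM αN ml mr nl nr m n) = g (t1 brM brN αM αN ml mr nl nr m n))
    (h₂ : ∀ n m, f (t2 brM brN αM αN ml mr nl nr n m) = g (t2 brM brN αM αN ml mr nl nr n m)) :
    f = g := by
  refine LinearMap.ext_on (HomTensor.span_t1_t2_eq_top ..) ?_
  rintro _ (⟨m, n, rfl⟩ | ⟨n, m, rfl⟩)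
  exacts [h₁ m n, h₂ n m]

end HomTensorGenerators

section TensorSquare

variable {𝕜 L P : Type*} [Field 𝕜] [AddCommGroup L] [Module 𝕜 L] [AddCommGroup P] [Module 𝕜 P]
  {brL : L →ₗ[𝕜] L →ₗ[𝕜] L} {αL : L →ₗ[𝕜] L}

theorem apply_mem_of_span_brackets_eq_top (hperf : Submodule.span 𝕜 {z | ∃ x y, z = brL x y} = ⊤)
    (g : L →ₗ[𝕜] L →ₗ[𝕜] P) {p : Submodule 𝕜 P} (h : ∀ x y x' y', g (brL x y) (brL x' y') ∈ p)
    (a b : L) : g a b ∈ p := by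
  have hab := Submodule.apply_mem_map₂ g (Submodule.mem_top (x := a)) (Submodule.mem_top (x := b))
  rw [← hperf, Submodule.map₂_span_span] at hab
  refine Submodule.span_le.2 ?_ hab
  rintro _ ⟨_, ⟨x, y, rfl⟩, _, ⟨x', y', rfl⟩, rfl⟩
  exact h x y x' y'

theorem span_tensorRel_le_ker (β : L →ₗ[𝕜] L →ₗ[𝕜] P)
    (hβ : ∀ x y z, β (αL x) (brL y z) = β (brL x y) (αL z) - β (brL x z) (αL y)) :
    Submodule.span 𝕜 (tensorRel brL brL αL αL brL brL brL brL) ≤ LinearMap.ker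
      (Finsupp.linearCombination 𝕜 (Sum.elim (fun p => β p.1 p.2) (fun p => β p.1 p.2))) := by
  rw [Submodule.span_le]
  rintro z (⟨_, _, _, rfl⟩ | ⟨_, _, _, rfl⟩ | ⟨_, _, _, rfl⟩ | ⟨_, _, _, rfl⟩ | ⟨_, _, _, rfl⟩ |
    ⟨_, _, _, rfl⟩ | ⟨_, _, _, rfl⟩ | ⟨_, _, _, rfl⟩ | ⟨_, _, _, rfl⟩ | ⟨_, _, _, rfl⟩ |
    ⟨_, _, _, rfl⟩ | ⟨_, _, _, rfl⟩ | ⟨_, _, _, rfl⟩ | ⟨_, _, _, rfl⟩ | ⟨_, _, _, _, rfl⟩ |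
    ⟨_, _, _, _, rfl⟩ | ⟨_, _, _, _, rfl⟩ | ⟨_, _, _, _, rfl⟩) <;>
  simp [g1, g2, hβ]

noncomputable def tensorSquareLift (β : L →ₗ[𝕜] L →ₗ[𝕜] P)
    (hβ : ∀ x y z, β (αL x) (brL y z) = β (brL x y) (αL z) - β (brL x z) (αL y)) :
    HomTensor brL brL αL αL brL brL brL brL →ₗ[𝕜] P :=
  Submodule.liftQ _ _ (span_tensorRel_le_ker β hβ)

variable (β : L →ₗ[𝕜] L →ₗ[𝕜] P)
  (hβ : ∀ x y z, β (αL x) (brL y z) = β (brL x y) (αL z) - β (brL x z) (αL y))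

@[simp]
theorem tensorSquareLift_t1 (a b : L) :
    tensorSquareLift β hβ (t1 brL brL αL αL brL brL brL brL a b) = β a b := by
  simp [tensorSquareLift, t1, g1]

@[simp]
theorem tensorSquareLift_t2 (a b : L) :
    tensorSquareLift β hβ (t2 brL brL αL αL brL brL brL brL a b) = β a b := by
  simp [tensorSquareLift, t2, g2]

theorem tensorSquare_bracket_eq
    {Br : HomTensor brL brL αL αL brL brL brL brL →ₗ[𝕜]
      HomTensor brL brL αL αL brL brL brL brL →ₗ[𝕜] HomTensor brL brL αL αL brL brL brL brL}
    (hBr1 : ∀ a b a' b', Br (t1 brL brL αL αL brL brL brL brL a b)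
      (t1 brL brL αL αL brL brL brL brL a' b') =
        t1 brL brL αL αL brL brL brL brL (brL a b) (brL a' b'))
    (hBr2 : ∀ a b a' b', Br (t1 brL brL αL αL brL brL brL brL a b)
      (t2 brL brL αL αL brL brL brL brL a' b') =
        t1 brL brL αL αL brL brL brL brL (brL a b) (brL a' b'))
    (hBr3 : ∀ a b a' b', Br (t2 brL brL αL αL brL brL brL brL a b)
      (t1 brL brL αL αL brL brL brL brL a' b') =
        t1 brL brL αL αL brL brL brL brL (brL a b) (brL a' b'))
    (hBr4 : ∀ a b a' b', Br (t2 brL brL αL αL brL brL brL brL a b)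
      (t2 brL brL αL αL brL brL brL brL a' b') =
        t1 brL brL αL αL brL brL brL brL (brL a b) (brL a' b'))
    {ψL : HomTensor brL brL αL αL brL brL brL brL →ₗ[𝕜] L}
    (hψ1 : ∀ a b, ψL (t1 brL brL αL αL brL brL brL brL a b) = brL a b)
    (hψ2 : ∀ a b, ψL (t2 brL brL αL αL brL brL brL brL a b) = brL a b) (z w) :
    Br z w = t1 brL brL αL αL brL brL brL brL (ψL z) (ψL w) := by
  suffices Br = (t1Bilin brL brL αL αL brL brL brL brL).compl₁₂ ψL ψL from
    LinearMap.congr_fun₂ this z w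
  refine HomTensor.linearMap_ext (fun a b => HomTensor.linearMap_ext ?_ ?_)
    (fun a b => HomTensor.linearMap_ext ?_ ?_) <;> intros <;>
      simp [hBr1, hBr2, hBr3, hBr4, hψ1, hψ2]

theorem tensorSquare_span_brackets_eq_top
    (hperf : Submodule.span 𝕜 {z | ∃ x y, z = brL x y} = ⊤)
    {Br : HomTensor brL brL αL αL brL brL brL brL →ₗ[𝕜]
      HomTensor brL brL αL αL brL brL brL brL →ₗ[𝕜] HomTensor brL brL αL αL brL brL brL brL}
    (hBr1 : ∀ a b a' b', Br (t1 brL brL αL αL brL brL brL brL a b)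
      (t1 brL brL αL αL brL brL brL brL a' b') =
        t1 brL brL αL αL brL brL brL brL (brL a b) (brL a' b')) :
    Submodule.span 𝕜 {z | ∃ a b, z = Br a b} = ⊤ := by
  rw [eq_top_iff, ← HomTensor.span_t1_t2_eq_top, Submodule.span_le]
  have hmem : ∀ x y x' y', t1 brL brL αL αL brL brL brL brL (brL x y) (brL x' y') ∈
      Submodule.span 𝕜 {z | ∃ a b, z = Br a b} :=
    fun x y x' y' => Submodule.subset_span ⟨_, _, (hBr1 x y x' y').symm⟩
  rintro _ (⟨a, b, rfl⟩ | ⟨a, b, rfl⟩)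
  · exact apply_mem_of_span_brackets_eq_top hperf (t1Bilin ..) hmem a b
  · refine apply_mem_of_span_brackets_eq_top hperf (t2Bilin ..) (fun x y x' y' => ?_) a b
    simpa [← t1_nr_ml_eq_t2] using hmem x y x' y'

end TensorSquare

section CentralExtension

variable {𝕜 K L C : Type*} [Field 𝕜] [AddCommGroup K] [Module 𝕜 K] [AddCommGroup L] [Module 𝕜 L]
  [AddCommGroup C] [Module 𝕜 C] {brC : C →ₗ[𝕜] C →ₗ[𝕜] C} {φ : C →ₗ[𝕜] L}

theorem bracket_eq_of_map_eq_of_central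
    (hφcentral : ∀ c, φ c = 0 → ∀ c', brC c c' = 0 ∧ brC c' c = 0)
    {x x' y y' : C} (hx : φ x = φ x') (hy : φ y = φ y') : brC x y = brC x' y' := by
  have h₁ := (hφcentral (x - x') (by rw [map_sub, hx, sub_self]) y).1
  have h₂ := (hφcentral (y - y') (by rw [map_sub, hy, sub_self]) x').2
  rw [map_sub, LinearMap.sub_apply, sub_eq_zero] at h₁
  rw [map_sub, sub_eq_zero] at h₂
  exact h₁.trans h₂

theorem eq_of_comp_eq_of_central_of_perfect {brK : K →ₗ[𝕜] K →ₗ[𝕜] K}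
    (hK : Submodule.span 𝕜 {z | ∃ a b, z = brK a b} = ⊤)
    (hφcentral : ∀ c, φ c = 0 → ∀ c', brC c c' = 0 ∧ brC c' c = 0) {f f' : K →ₗ[𝕜] C}
    (hf : ∀ a b, f (brK a b) = brC (f a) (f b)) (hf' : ∀ a b, f' (brK a b) = brC (f' a) (f' b))
    (h : φ ∘ₗ f = φ ∘ₗ f') : f = f' := by
  refine LinearMap.ext_on hK ?_
  rintro _ ⟨a, b, rfl⟩
  rw [hf, hf']
  exact bracket_eq_of_map_eq_of_central hφcentral (LinearMap.congr_fun h a)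
    (LinearMap.congr_fun h b)

theorem exists_bracket_descent (hφsurj : Function.Surjective φ)
    (hφcentral : ∀ c, φ c = 0 → ∀ c', brC c c' = 0 ∧ brC c' c = 0) :
    ∃ β : L →ₗ[𝕜] L →ₗ[𝕜] C, ∀ x y, β (φ x) (φ y) = brC x y := by
  obtain ⟨s, hs⟩ := φ.exists_rightInverse_of_surjective (LinearMap.range_eq_top.2 hφsurj)
  refine ⟨brC.compl₁₂ s s, fun x y => bracket_eq_of_map_eq_of_central hφcentral ?_ ?_⟩ <;>
    exact LinearMap.congr_fun hs _

variable {brL : L →ₗ[𝕜] L →ₗ[𝕜] L} {αL : L →ₗ[𝕜] L} {αC : C →ₗ[𝕜] C} {β : L →ₗ[𝕜] L →ₗ[𝕜] C}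

theorem bracket_descent_map (hφsurj : Function.Surjective φ)
    (hβ : ∀ x y, β (φ x) (φ y) = brC x y) (hφbr : ∀ a b, φ (brC a b) = brL (φ a) (φ b)) (a b : L) :
    φ (β a b) = brL a b := by
  obtain ⟨x, rfl⟩ := hφsurj a
  obtain ⟨y, rfl⟩ := hφsurj b
  rw [hβ, hφbr]

theorem bracket_descent_α (hφsurj : Function.Surjective φ)
    (hβ : ∀ x y, β (φ x) (φ y) = brC x y) (hφα : ∀ a, φ (αC a) = αL (φ a))
    (hαC : ∀ x y, αC (brC x y) = brC (αC x) (αC y)) (a b : L) :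
    β (αL a) (αL b) = αC (β a b) := by
  obtain ⟨x, rfl⟩ := hφsurj a
  obtain ⟨y, rfl⟩ := hφsurj b
  rw [← hφα, ← hφα, hβ, hβ, hαC]

theorem bracket_descent_leibniz (hφsurj : Function.Surjective φ)
    (hβ : ∀ x y, β (φ x) (φ y) = brC x y) (hφbr : ∀ a b, φ (brC a b) = brL (φ a) (φ b))
    (hφα : ∀ a, φ (αC a) = αL (φ a))
    (hC : ∀ x y z, brC (αC x) (brC y z) = brC (brC x y) (αC z) - brC (brC x z) (αC y))
    (a b c : L) : β (αL a) (brL b c) = β (brL a b) (αL c) - β (brL a c) (αL b) := by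
  obtain ⟨x, rfl⟩ := hφsurj a
  obtain ⟨y, rfl⟩ := hφsurj b
  obtain ⟨z, rfl⟩ := hφsurj c
  simp only [← hφα, ← hφbr, hβ, hC]

end CentralExtension

/-- If `(L,α_L)` is a perfect Hom-Leibniz algebra, then
`ψ_L : (L∗L, α_{L∗L}) → (L,α_L)`, `ψ_L(l∗l') = [l,l']`, is a universal central extension:
`ψ_L` is a surjective homomorphism with kernel contained in the center of `L∗L`, and for
every central extension `φ : (C,α_C) → (L,α_L)` there is a unique Hom-Leibniz
homomorphism `f : L∗L → C` with `φ ∘ f = ψ_L`. Here `L` acts on itself by its bracket. -/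
theorem tensor_square_universal_central_extension {𝕜 L C : Type*} [Field 𝕜]
    [AddCommGroup L] [Module 𝕜 L] [AddCommGroup C] [Module 𝕜 C]
    (brL : L →ₗ[𝕜] L →ₗ[𝕜] L) (αL : L →ₗ[𝕜] L) (hL : IsHomLeibniz brL αL)
    (hperf : Submodule.span 𝕜 {z : L | ∃ x y, z = brL x y} = ⊤)
    (Br : HomTensor brL brL αL αL brL brL brL brL →ₗ[𝕜]
      HomTensor brL brL αL αL brL brL brL brL →ₗ[𝕜] HomTensor brL brL αL αL brL brL brL brL)
    (hBr1 : ∀ a b a' b', Br (t1 brL brL αL αL brL brL brL brL a b)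
      (t1 brL brL αL αL brL brL brL brL a' b') =
        t1 brL brL αL αL brL brL brL brL (brL a b) (brL a' b'))
    (hBr2 : ∀ a b a' b', Br (t1 brL brL αL αL brL brL brL brL a b)
      (t2 brL brL αL αL brL brL brL brL a' b') =
        t1 brL brL αL αL brL brL brL brL (brL a b) (brL a' b'))
    (hBr3 : ∀ a b a' b', Br (t2 brL brL αL αL brL brL brL brL a b)
      (t1 brL brL αL αL brL brL brL brL a' b') =
        t1 brL brL αL αL brL brL brL brL (brL a b) (brL a' b'))
    (hBr4 : ∀ a b a' b', Br (t2 brL brL αL αL brL brL brL brL a b)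
      (t2 brL brL αL αL brL brL brL brL a' b') =
        t1 brL brL αL αL brL brL brL brL (brL a b) (brL a' b'))
    (αT : HomTensor brL brL αL αL brL brL brL brL →ₗ[𝕜] HomTensor brL brL αL αL brL brL brL brL)
    (hαT1 : ∀ a b, αT (t1 brL brL αL αL brL brL brL brL a b) =
      t1 brL brL αL αL brL brL brL brL (αL a) (αL b))
    (hαT2 : ∀ a b, αT (t2 brL brL αL αL brL brL brL brL a b) =
      t2 brL brL αL αL brL brL brL brL (αL a) (αL b))
    (ψL : HomTensor brL brL αL αL brL brL brL brL →ₗ[𝕜] L)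
    (hψ1 : ∀ a b, ψL (t1 brL brL αL αL brL brL brL brL a b) = brL a b)
    (hψ2 : ∀ a b, ψL (t2 brL brL αL αL brL brL brL brL a b) = brL a b)
    (brC : C →ₗ[𝕜] C →ₗ[𝕜] C) (αC : C →ₗ[𝕜] C) (hC : IsHomLeibniz brC αC)
    (φ : C →ₗ[𝕜] L) (hφbr : ∀ a b, φ (brC a b) = brL (φ a) (φ b))
    (hφα : ∀ a, φ (αC a) = αL (φ a)) (hφsurj : Function.Surjective φ)
    (hφcentral : ∀ c, φ c = 0 → ∀ c', brC c c' = 0 ∧ brC c' c = 0) :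
    Function.Surjective ψL ∧
    (∀ z, ψL z = 0 → ∀ w, Br z w = 0 ∧ Br w z = 0) ∧
    (∀ a, ψL (αT a) = αL (ψL a)) ∧
    (∀ a b, ψL (Br a b) = brL (ψL a) (ψL b)) ∧
    ∃! f : HomTensor brL brL αL αL brL brL brL brL →ₗ[𝕜] C,
      (∀ a b, f (Br a b) = brC (f a) (f b)) ∧
      (∀ a, f (αT a) = αC (f a)) ∧
      (∀ t, φ (f t) = ψL t) := by
  have hBr := tensorSquare_bracket_eq hBr1 hBr2 hBr3 hBr4 hψ1 hψ2
  obtain ⟨β, hβ⟩ := exists_bracket_descent hφsurj hφcentral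
  set f := tensorSquareLift β (bracket_descent_leibniz hφsurj hβ hφbr hφα hC.1)
  have hφf : ∀ t, φ (f t) = ψL t := LinearMap.congr_fun (g := ψL) <|
    HomTensor.linearMap_ext (f := φ ∘ₗ f) (by simp [f, bracket_descent_map hφsurj hβ hφbr, hψ1])
      (by simp [f, bracket_descent_map hφsurj hβ hφbr, hψ2])
  have hfBr : ∀ a b, f (Br a b) = brC (f a) (f b) := fun a b => by
    rw [hBr, tensorSquareLift_t1, ← hφf, ← hφf, hβ]
  refine ⟨?_, fun z hz w => ?_, fun a => ?_, fun a b => by rw [hBr, hψ1],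
    f, ⟨hfBr, fun a => ?_, hφf⟩, fun f' hf' => ?_⟩
  · rw [← LinearMap.range_eq_top, eq_top_iff, ← hperf, Submodule.span_le]
    rintro _ ⟨x, y, rfl⟩
    exact ⟨_, hψ1 x y⟩
  · rw [hBr, hBr, hz]
    simp only [← t1Bilin_apply, map_zero, LinearMap.zero_apply, and_self]
  · exact LinearMap.congr_fun (f := ψL ∘ₗ αT) (g := αL ∘ₗ ψL)
      (HomTensor.linearMap_ext (by simp [hαT1, hψ1, hL.2]) (by simp [hαT2, hψ2, hL.2])) a
  · exact LinearMap.congr_fun (f := f ∘ₗ αT) (g := αC ∘ₗ f)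
      (HomTensor.linearMap_ext (by simp [hαT1, f, bracket_descent_α hφsurj hβ hφα hC.2])
        (by simp [hαT2, f, bracket_descent_α hφsurj hβ hφα hC.2])) a
  · exact eq_of_comp_eq_of_central_of_perfect (tensorSquare_span_brackets_eq_top hperf hBr1)
      hφcentral hf'.1 hfBr (LinearMap.ext fun t => (hf'.2.2 t).trans (hφf t).symm)
end
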